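/- arXiv:2307.16552 — 2 statements merged into one kernel-verified Lean document; each statement's English description precedes it below -/
import Mathlib

section
/- Let R : X ⇸ Y be a total and surjective relation, with projection functions π_X : R → X and π_Y : R → Y from R viewed as a set of pairs. Then M̃ R = (gr(M π_X))° ; gr(M π_Y), i.e., (U, V) ∈ M̃ R if and only if there exists W ∈ M R with (M π_X) W = U and (M π_Y) W = V. -/
universe u v

open CategoryTheory

/-- The graph of a function, as a relation. -/
def gr {X Y : Type u} (f : X → Y) : Rel X Y := fun x y => f x = y

/-- A lax lifting of an endofunctor `F` on `Set` to relations: monotone, laxly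
functorial, and laxly extending graphs and converse graphs. -/
structure LaxLifting (F : Type u ⥤ Type u) : Type (u + 1) where
  map : ∀ {X Y : Type u}, Rel X Y → Rel (F.obj X) (F.obj Y)
  mono : ∀ {X Y : Type u} {R S : Rel X Y}, R ≤ S → map R ≤ map S
  laxComp : ∀ {X Y Z : Type u} (R : Rel X Y) (S : Rel Y Z),
    Relation.Comp (map R) (map S) ≤ map (Relation.Comp R S)
  graph_le : ∀ {X Y : Type u} (f : X → Y), gr ⇑(F.map (TypeCat.ofHom f)) ≤ map (gr f)
  graphInv_le : ∀ {X Y : Type u} (f : X → Y), flip (gr ⇑(F.map (TypeCat.ofHom f))) ≤ map (flip (gr f))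

/-- Pointwise order on lax liftings. -/
def LiftLE {F : Type u ⥤ Type u} (L L' : LaxLifting F) : Prop :=
  ∀ (X Y : Type u) (R : Rel X Y), L.map R ≤ L'.map R

/-- The monotone neighbourhood functor: \`M X\` is the set of upward-closed
collections of subsets of \`X\`. -/
def MFunctor : Type u ⥤ Type u where
  obj X := {U : Set (Set X) // ∀ u u' : Set X, u ∈ U → u ⊆ u' → u' ∈ U}
  map f := TypeCat.ofHom fun U => ⟨{v | ⇑f ⁻¹' v ∈ U.1}, fun v v' hv hsub =>
    U.2 _ _ hv (Set.preimage_mono hsub)⟩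
  map_id X := rfl
  map_comp f g := rfl

/-- The lifting \`M̃\` of the monotone neighbourhood functor. -/
def Mtilde {X Y : Type u} (R : Rel X Y) :
    Rel (MFunctor.obj X) (MFunctor.obj Y) := fun U V =>
  (∀ u ∈ U.1, ∃ v ∈ V.1, ∀ y ∈ v, ∃ x ∈ u, R x y) ∧
  (∀ v ∈ V.1, ∃ u ∈ U.1, ∀ x ∈ u, ∃ y ∈ v, R x y)

/-!
By upward closure, `M̃ R U V` only has to test the `R`-images themselves: `R[u] ∈ V` for `u ∈ U`
and `R⁻¹[v] ∈ U` for `v ∈ V`. Writing `R` as the span `X ← R → Y` of its projections, these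
are `π_Y '' (π_X ⁻¹' u)` and `π_X '' (π_Y ⁻¹' v)`. Conversely, given such `U` and `V`, the
upward closure `W` of `π_X ⁻¹' U ∪ π_Y ⁻¹' V` maps onto both: totality and surjectivity make
the projections surjective, so `π_X ⁻¹' u' ⊆ π_X ⁻¹' u` forces `u' ⊆ u`, while
`π_Y ⁻¹' v ⊆ π_X ⁻¹' u` says `R⁻¹[v] ⊆ u`.
-/

namespace MFunctor

variable {X Y S : Type u}

theorem mem_map_iff (f : X → Y) (W : MFunctor.obj X) (v : Set Y) :
    v ∈ (MFunctor.map (TypeCat.ofHom f) W).1 ↔ f ⁻¹' v ∈ W.1 :=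
  Iff.rfl

theorem mem_of_subset (U : MFunctor.obj X) {u u' : Set X} (hu : u ∈ U.1) (h : u ⊆ u') :
    u' ∈ U.1 :=
  U.2 u u' hu h

def upClosure (A : Set (Set X)) : MFunctor.obj X :=
  ⟨{w | ∃ a ∈ A, a ⊆ w}, fun _ _ ⟨a, ha, haw⟩ hww' => ⟨a, ha, haw.trans hww'⟩⟩

theorem mem_upClosure_iff (A : Set (Set X)) (w : Set X) :
    w ∈ (upClosure A).1 ↔ ∃ a ∈ A, a ⊆ w :=
  Iff.rfl

theorem image_preimage_mem_map (f : S → X) (g : S → Y) (W : MFunctor.obj S) {u : Set X}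
    (hu : u ∈ (MFunctor.map (TypeCat.ofHom f) W).1) :
    g '' (f ⁻¹' u) ∈ (MFunctor.map (TypeCat.ofHom g) W).1 :=
  mem_of_subset W hu (Set.subset_preimage_image g _)

theorem map_upClosure_eq {f : S → X} (g : S → Y) (hf : Function.Surjective f)
    {U : MFunctor.obj X} {V : MFunctor.obj Y} (hV : ∀ v ∈ V.1, f '' (g ⁻¹' v) ∈ U.1) :
    MFunctor.map (TypeCat.ofHom f) (upClosure (Set.preimage f '' U.1 ∪ Set.preimage g '' V.1))
      = U := by
  refine Subtype.ext (Set.ext fun u => ?_)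
  rw [mem_map_iff, mem_upClosure_iff]
  constructor
  · rintro ⟨_, ⟨u', hu', rfl⟩ | ⟨v, hv, rfl⟩, hsub⟩
    · exact mem_of_subset U hu' (hf.preimage_subset_preimage_iff.mp hsub)
    · exact mem_of_subset U (hV v hv) (Set.image_subset_iff.mpr hsub)
  · exact fun hu => ⟨f ⁻¹' u, Or.inl ⟨u, hu, rfl⟩, subset_rfl⟩

theorem exists_map_eq_iff {f : S → X} {g : S → Y} (hf : Function.Surjective f)
    (hg : Function.Surjective g) (U : MFunctor.obj X) (V : MFunctor.obj Y) :
    (∃ W : MFunctor.obj S,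
        MFunctor.map (TypeCat.ofHom f) W = U ∧ MFunctor.map (TypeCat.ofHom g) W = V) ↔
      (∀ u ∈ U.1, g '' (f ⁻¹' u) ∈ V.1) ∧ (∀ v ∈ V.1, f '' (g ⁻¹' v) ∈ U.1) := by
  constructor
  · rintro ⟨W, rfl, rfl⟩
    exact ⟨fun u => image_preimage_mem_map f g W, fun v => image_preimage_mem_map g f W⟩
  · rintro ⟨hU, hV⟩
    refine ⟨upClosure (Set.preimage f '' U.1 ∪ Set.preimage g '' V.1),
      map_upClosure_eq g hf hV, ?_⟩
    rw [Set.union_comm]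
    exact map_upClosure_eq f hg hU

end MFunctor

section Span

variable {X Y : Type u} (R : Rel X Y)

theorem Mtilde_iff_image_mem (U : MFunctor.obj X) (V : MFunctor.obj Y) :
    Mtilde R U V ↔
      (∀ u ∈ U.1, {y | ∃ x ∈ u, R x y} ∈ V.1) ∧ (∀ v ∈ V.1, {x | ∃ y ∈ v, R x y} ∈ U.1) := by
  refine and_congr (forall₂_congr fun u _ => ⟨?_, ?_⟩) (forall₂_congr fun v _ => ⟨?_, ?_⟩)
  · rintro ⟨v, hv, hsub⟩
    exact MFunctor.mem_of_subset V hv hsub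
  · exact fun h => ⟨_, h, fun _ hy => hy⟩
  · rintro ⟨u, hu, hsub⟩
    exact MFunctor.mem_of_subset U hu hsub
  · exact fun h => ⟨_, h, fun _ hx => hx⟩

theorem image_snd_preimage_fst (u : Set X) :
    (fun p : {p : X × Y // R p.1 p.2} => p.1.2) '' ((fun p => p.1.1) ⁻¹' u) =
      {y | ∃ x ∈ u, R x y} := by
  ext y
  simp

theorem image_fst_preimage_snd (v : Set Y) :
    (fun p : {p : X × Y // R p.1 p.2} => p.1.1) '' ((fun p => p.1.2) ⁻¹' v) =
      {x | ∃ y ∈ v, R x y} := by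
  ext x
  simp

end Span

/-- For a total surjective relation `R`, with projections `π_X, π_Y` out of `R`
viewed as a set of pairs, `M̃ R = (gr (M π_X))° ; gr (M π_Y)`: i.e.
`(U, V) ∈ M̃ R` iff there is `W ∈ M R` with `(M π_X) W = U` and `(M π_Y) W = V`. -/
theorem Mtilde_eq_span_of_total_surjective {X Y : Type u} (R : Rel X Y)
    (htot : ∀ x : X, ∃ y : Y, R x y) (hsur : ∀ y : Y, ∃ x : X, R x y)
    (U : MFunctor.obj X) (V : MFunctor.obj Y) :
    Mtilde R U V ↔
      ∃ W : MFunctor.obj {p : X × Y // R p.1 p.2},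
        MFunctor.map (TypeCat.ofHom fun p : {p : X × Y // R p.1 p.2} => p.1.1) W = U ∧
        MFunctor.map (TypeCat.ofHom fun p : {p : X × Y // R p.1 p.2} => p.1.2) W = V := by
  have hfst : Function.Surjective fun p : {p : X × Y // R p.1 p.2} => p.1.1 := fun x =>
    let ⟨y, hxy⟩ := htot x; ⟨⟨(x, y), hxy⟩, rfl⟩
  have hsnd : Function.Surjective fun p : {p : X × Y // R p.1 p.2} => p.1.2 := fun y =>
    let ⟨x, hxy⟩ := hsur y; ⟨⟨(x, y), hxy⟩, rfl⟩
  rw [MFunctor.exists_map_eq_iff hfst hsnd, Mtilde_iff_image_mem]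
  simp only [image_snd_preimage_fst, image_fst_preimage_snd]
end

section
/- The lifting M̃ is the minimal lax lifting of the monotone neighbourhood functor M: M̃ is itself a lax M-lifting, and for every lax M-lifting L and every relation R : X ⇸ Y, M̃ R ⊆ L R. -/
universe u v

open CategoryTheory

/-!
A relation `R : X ⇸ Y` is the pullback of the total relation `⊇` on `Set Y` along
`x ↦ R[x]` and `y ↦ {y}`. Every lax lifting `L` is stable under pulling back and pushing
forward along functions, and relates the two marginals of any `W ∈ F E` over a span `E`
contained in a relation. For a relation `S` that is total in both directions, every
`M̃ S`-related pair `(U, V)` is the pair of marginals of the up-set on the graph of `S`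
generated by the preimages of `U` and `V`; hence `M̃ S ≤ L S`. Since `M̃` is itself a lax
lifting, it pushes `M̃ R` forward into `M̃ (⊇)`, and pulling back in `L` gives `M̃ R ≤ L R`.
-/

namespace LaxLifting

variable {F : Type u ⥤ Type u} (L : LaxLifting F)

theorem map_of_span {X Y E : Type u} {R : Rel X Y} (p : E → X) (q : E → Y)
    (hR : ∀ e, R (p e) (q e)) (W : F.obj E) :
    L.map R (F.map (TypeCat.ofHom p) W) (F.map (TypeCat.ofHom q) W) := by
  refine L.mono ?_ _ _ (L.laxComp (flip (gr p)) (gr q) _ _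
    ⟨W, L.graphInv_le p _ _ rfl, L.graph_le q _ _ rfl⟩)
  rintro _ _ ⟨e, rfl, rfl⟩
  exact hR e

theorem map_of_map_map {X Y X' Y' : Type u} {R : Rel X Y} {S : Rel X' Y'}
    {f : X → X'} {g : Y → Y'} (hSR : ∀ x y, S (f x) (g y) → R x y)
    {U : F.obj X} {V : F.obj Y}
    (h : L.map S (F.map (TypeCat.ofHom f) U) (F.map (TypeCat.ofHom g) V)) :
    L.map R U V := by
  refine L.mono ?_ _ _ (L.laxComp (gr f) _ _ _
    ⟨_, L.graph_le f _ _ rfl, L.laxComp S (flip (gr g)) _ _ ⟨_, h, L.graphInv_le g _ _ rfl⟩⟩)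
  rintro x y ⟨_, rfl, _, hS, rfl⟩
  exact hSR x y hS

theorem map_map_of_map {X Y X' Y' : Type u} {R : Rel X Y} {S : Rel X' Y'}
    {f : X → X'} {g : Y → Y'} (hRS : ∀ x y, R x y → S (f x) (g y))
    {U : F.obj X} {V : F.obj Y} (h : L.map R U V) :
    L.map S (F.map (TypeCat.ofHom f) U) (F.map (TypeCat.ofHom g) V) := by
  refine L.mono ?_ _ _ (L.laxComp (flip (gr f)) _ _ _
    ⟨_, L.graphInv_le f _ _ rfl, L.laxComp R (gr g) _ _ ⟨_, h, L.graph_le g _ _ rfl⟩⟩)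
  rintro _ _ ⟨x, rfl, y, hR, rfl⟩
  exact hRS x y hR

end LaxLifting

section Mtilde

variable {X Y Z : Type u}

theorem Mtilde_mono {R S : Rel X Y} (hRS : R ≤ S) : Mtilde R ≤ Mtilde S := by
  rintro U V ⟨hUV, hVU⟩
  constructor
  · intro u hu
    obtain ⟨v, hv, hvu⟩ := hUV u hu
    exact ⟨v, hv, fun y hy => (hvu y hy).imp fun x ⟨hx, hR⟩ => ⟨hx, hRS x y hR⟩⟩
  · intro v hv
    obtain ⟨u, hu, huv⟩ := hVU v hv
    exact ⟨u, hu, fun x hx => (huv x hx).imp fun y ⟨hy, hR⟩ => ⟨hy, hRS x y hR⟩⟩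

theorem Mtilde_comp_le (R : Rel X Y) (S : Rel Y Z) :
    Relation.Comp (Mtilde R) (Mtilde S) ≤ Mtilde (Relation.Comp R S) := by
  rintro U V ⟨W, ⟨hUW, hWU⟩, ⟨hWV, hVW⟩⟩
  constructor
  · intro u hu
    obtain ⟨w, hw, hwu⟩ := hUW u hu
    obtain ⟨v, hv, hvw⟩ := hWV w hw
    refine ⟨v, hv, fun z hz => ?_⟩
    obtain ⟨y, hy, hS⟩ := hvw z hz
    obtain ⟨x, hx, hR⟩ := hwu y hy
    exact ⟨x, hx, y, hR, hS⟩
  · intro v hv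
    obtain ⟨w, hw, hwv⟩ := hVW v hv
    obtain ⟨u, hu, huw⟩ := hWU w hw
    refine ⟨u, hu, fun x hx => ?_⟩
    obtain ⟨y, hy, hR⟩ := huw x hx
    obtain ⟨z, hz, hS⟩ := hwv y hy
    exact ⟨z, hz, y, hR, hS⟩

theorem Mtilde_flip (R : Rel X Y) : Mtilde (flip R) = flip (Mtilde R) := by
  ext V U
  exact and_comm

theorem graph_le_Mtilde (f : X → Y) :
    gr ⇑(MFunctor.map (TypeCat.ofHom f)) ≤ Mtilde (gr f) := by
  rintro U _ rfl
  constructor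
  · intro u hu
    exact ⟨f '' u, U.2 _ _ hu (Set.subset_preimage_image f u),
      fun _ ⟨x, hx, hfx⟩ => ⟨x, hx, hfx⟩⟩
  · intro v hv
    exact ⟨f ⁻¹' v, hv, fun x hx => ⟨f x, hx, rfl⟩⟩

def MtildeLifting : LaxLifting MFunctor.{u} where
  map := Mtilde
  mono := Mtilde_mono
  laxComp := Mtilde_comp_le
  graph_le := graph_le_Mtilde
  graphInv_le f := by
    rw [Mtilde_flip]
    exact fun V U h => graph_le_Mtilde f U V h

def couplingOfMtilde (S : Rel X Y) (U : MFunctor.obj X) (V : MFunctor.obj Y) :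
    MFunctor.obj {p : X × Y // S p.1 p.2} :=
  ⟨{w | (∃ u ∈ U.1, (fun e => e.1.1) ⁻¹' u ⊆ w) ∨ ∃ v ∈ V.1, (fun e => e.1.2) ⁻¹' v ⊆ w},
    fun _ _ hw hsub => hw.imp
      (fun ⟨u, hu, hsu⟩ => ⟨u, hu, hsu.trans hsub⟩)
      (fun ⟨v, hv, hsv⟩ => ⟨v, hv, hsv.trans hsub⟩)⟩

variable {S : Rel X Y} {U : MFunctor.obj X} {V : MFunctor.obj Y}

theorem map_fst_couplingOfMtilde (hS : ∀ x, ∃ y, S x y) (h : Mtilde S U V) :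
    MFunctor.map (TypeCat.ofHom fun e : {p : X × Y // S p.1 p.2} => e.1.1)
      (couplingOfMtilde S U V) = U := by
  refine Subtype.ext (Set.ext fun u => ⟨?_, fun hu => Or.inl ⟨u, hu, subset_rfl⟩⟩)
  rintro (⟨u', hu', hsub⟩ | ⟨v, hv, hsub⟩)
  · refine U.2 _ _ hu' fun x hx => ?_
    obtain ⟨y, hxy⟩ := hS x
    exact hsub (show (⟨(x, y), hxy⟩ : {p : X × Y // S p.1 p.2}).1.1 ∈ u' from hx)
  · obtain ⟨u', hu', hu'v⟩ := h.2 v hv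
    refine U.2 _ _ hu' fun x hx => ?_
    obtain ⟨y, hy, hxy⟩ := hu'v x hx
    exact hsub (show (⟨(x, y), hxy⟩ : {p : X × Y // S p.1 p.2}).1.2 ∈ v from hy)

theorem map_snd_couplingOfMtilde (hS : ∀ y, ∃ x, S x y) (h : Mtilde S U V) :
    MFunctor.map (TypeCat.ofHom fun e : {p : X × Y // S p.1 p.2} => e.1.2)
      (couplingOfMtilde S U V) = V := by
  refine Subtype.ext (Set.ext fun v => ⟨?_, fun hv => Or.inr ⟨v, hv, subset_rfl⟩⟩)
  rintro (⟨u, hu, hsub⟩ | ⟨v', hv', hsub⟩)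
  · obtain ⟨v', hv', hv'u⟩ := h.1 u hu
    refine V.2 _ _ hv' fun y hy => ?_
    obtain ⟨x, hx, hxy⟩ := hv'u y hy
    exact hsub (show (⟨(x, y), hxy⟩ : {p : X × Y // S p.1 p.2}).1.1 ∈ u from hx)
  · refine V.2 _ _ hv' fun y hy => ?_
    obtain ⟨x, hxy⟩ := hS y
    exact hsub (show (⟨(x, y), hxy⟩ : {p : X × Y // S p.1 p.2}).1.2 ∈ v' from hy)

theorem Mtilde_le_map_of_total (L : LaxLifting MFunctor.{u})
    (hl : ∀ x, ∃ y, S x y) (hr : ∀ y, ∃ x, S x y) : Mtilde S ≤ L.map S := by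
  intro U V h
  have hW := L.map_of_span _ _ (fun e : {p : X × Y // S p.1 p.2} => e.2) (couplingOfMtilde S U V)
  rwa [map_fst_couplingOfMtilde hl h, map_snd_couplingOfMtilde hr h] at hW

theorem Mtilde_le_map (L : LaxLifting MFunctor.{u}) (R : Rel X Y) : Mtilde R ≤ L.map R := by
  intro U V h
  let superset : Rel (Set Y) (Set Y) := fun s t => t ⊆ s
  have hR : ∀ x y, R x y ↔ superset {y' | R x y'} {y} := fun _ _ => Set.singleton_subset_iff.symm
  refine L.map_of_map_map (S := superset) (fun x y => (hR x y).2) ?_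
  refine Mtilde_le_map_of_total (S := superset) L (fun _ => ⟨∅, Set.empty_subset _⟩)
    (fun _ => ⟨Set.univ, Set.subset_univ _⟩) _ _ ?_
  exact MtildeLifting.map_map_of_map (fun x y => (hR x y).1) h

end Mtilde

/-- `M̃` is the minimal lax lifting of the monotone neighbourhood functor: it is
itself a lax lifting, and it is below every lax lifting. -/
theorem Mtilde_minimal :
    (∃ LM : LaxLifting (MFunctor.{u}), ∀ (X Y : Type u) (R : Rel X Y),
      LM.map R = Mtilde R) ∧
    (∀ (L : LaxLifting (MFunctor.{u})) (X Y : Type u) (R : Rel X Y),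
      Mtilde R ≤ L.map R) :=
  ⟨⟨MtildeLifting, fun _ _ _ => rfl⟩, fun L _ _ R => Mtilde_le_map L R⟩
end
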